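/- arXiv:1305.5361 — 2 statements merged into one kernel-verified Lean document; each statement's English description precedes it below -/
import Mathlib

section
/- A triangulated category equipped with a bounded t-structure is idempotent complete, i.e. every idempotent endomorphism of an object splits. -/
open CategoryTheory CategoryTheory.Limits CategoryTheory.Pretriangulated

/-!
An idempotent `p` of an object `X` of the heart is split by truncating the fibre of `𝟙 - p`:
that fibre is morally the image of `p` plus its shift by `-1`, and `τ≤a` keeps only the image.
In general the truncation triangle `τ≤a X → X → τ>a X → (τ≤a X)⟦1⟧` is functorial, so `p`
induces idempotents on both truncations, which split by induction on the amplitude. Their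
images assemble into a retract of the truncation triangle; its middle term splits an idempotent
`q` of `X` inducing the same idempotents as `p` on the truncations. An endomorphism of a
distinguished triangle vanishing on the outer terms has square zero, so `(p - q)² = 0`, whence
`p q p = p` and `q p q = q`, and the splitting of `q` transports to one of `p`.
-/

namespace CategoryTheory

def IsSplitIdempotent {C : Type*} [Category C] {X : C} (p : X ⟶ X) : Prop :=
  ∃ (Y : C) (i : Y ⟶ X) (r : X ⟶ Y), i ≫ r = 𝟙 Y ∧ r ≫ i = p

section Preadditive

variable {C : Type*} [Category C] [Preadditive C]

lemma comp_comp_eq_self_of_sub_comp_sub_eq_zero {X : C} {p q : X ⟶ X} (hp : p ≫ p = p)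
    (hq : q ≫ q = q) (hpq : (p - q) ≫ (p - q) = 0) : p ≫ q ≫ p = p := by
  have h := congrArg (fun f => p ≫ f ≫ p) hpq
  simp only [Preadditive.sub_comp, Preadditive.comp_sub, Category.assoc, hp, hq,
    reassoc_of% hp, comp_zero, zero_comp, sub_self, sub_zero, sub_eq_zero] at h
  exact h.symm

lemma IsSplitIdempotent.of_sub_comp_sub_eq_zero {X : C} {p q : X ⟶ X}
    (hq : IsSplitIdempotent q) (hp : p ≫ p = p) (hpq : (p - q) ≫ (p - q) = 0) :
    IsSplitIdempotent p := by
  obtain ⟨Y, i, r, hir, rfl⟩ := hq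
  have hq : (r ≫ i) ≫ r ≫ i = r ≫ i := by simp [reassoc_of% hir]
  have hqp : (r ≫ i - p) ≫ (r ≫ i - p) = 0 := by
    rw [← neg_sub, Preadditive.neg_comp_neg, hpq]
  refine ⟨Y, i ≫ p, p ≫ r, ?_, ?_⟩
  · calc (i ≫ p) ≫ p ≫ r = i ≫ ((r ≫ i) ≫ p ≫ r ≫ i) ≫ r := by
          simp [reassoc_of% hir, reassoc_of% hp, hir]
      _ = 𝟙 Y := by
          rw [comp_comp_eq_self_of_sub_comp_sub_eq_zero hq hp hqp]
          simp [hir]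
  · simpa using comp_comp_eq_self_of_sub_comp_sub_eq_zero hp hq hpq

end Preadditive

namespace Pretriangulated

variable {C : Type*} [Category C] [Preadditive C] [HasZeroObject C] [HasShift C ℤ]
  [∀ (n : ℤ), (shiftFunctor C n).Additive] [Pretriangulated C]

lemma hom₂_comp_hom₂_eq_zero {T₁ T₂ T₃ : Triangle C} (hT₂ : T₂ ∈ distTriang C)
    (f : T₁ ⟶ T₂) (g : T₂ ⟶ T₃) (hf : f.hom₃ = 0) (hg : g.hom₁ = 0) : f.hom₂ ≫ g.hom₂ = 0 := by
  obtain ⟨h, hh⟩ := Triangle.coyoneda_exact₂ T₂ hT₂ f.hom₂ (by rw [← f.comm₂, hf, comp_zero])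
  rw [hh, Category.assoc, g.comm₁, hg, zero_comp, comp_zero]

lemma exists_retract_of_isSplitIdempotent_hom₁_hom₃ {T : Triangle C} (hT : T ∈ distTriang C)
    (φ : T ⟶ T) (h₁ : IsSplitIdempotent φ.hom₁) (h₃ : IsSplitIdempotent φ.hom₃) :
    ∃ (T₀ : Triangle C) (ι : T₀ ⟶ T) (ρ : T ⟶ T₀),
      ι ≫ ρ = 𝟙 T₀ ∧ (ρ ≫ ι).hom₁ = φ.hom₁ ∧ (ρ ≫ ι).hom₃ = φ.hom₃ := by
  obtain ⟨A₀, iA, rA, hiA, hrA⟩ := h₁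
  obtain ⟨B₀, iB, rB, hiB, hrB⟩ := h₃
  obtain ⟨X₀, f₀, g₀, hT₀⟩ := distinguished_cocone_triangle₂ (iB ≫ T.mor₃ ≫ rA⟦(1 : ℤ)⟧')
  have hδ : rB ≫ iB ≫ T.mor₃ = T.mor₃ ≫ (rA ≫ iA)⟦(1 : ℤ)⟧' := by
    rw [reassoc_of% hrB, hrA, φ.comm₃]
  have hρ : T.mor₃ ≫ rA⟦(1 : ℤ)⟧' = rB ≫ iB ≫ T.mor₃ ≫ rA⟦(1 : ℤ)⟧' := by
    rw [reassoc_of% hδ, ← Functor.map_comp, Category.assoc, hiA, Category.comp_id]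
  have hι : (iB ≫ T.mor₃ ≫ rA⟦(1 : ℤ)⟧') ≫ iA⟦(1 : ℤ)⟧' = iB ≫ T.mor₃ := by
    rw [Category.assoc, Category.assoc, ← Functor.map_comp, ← hδ, reassoc_of% hiB]
  obtain ⟨r, hr₁, hr₂⟩ := complete_distinguished_triangle_morphism₂ _ _ hT hT₀ rA rB hρ
  obtain ⟨i, hi₁, hi₂⟩ := complete_distinguished_triangle_morphism₂ _ _ hT₀ hT iA iB hι
  let ρ := Triangle.homMk _ _ rA r rB hr₁ hr₂ hρ
  let ι := Triangle.homMk _ _ iA i iB hi₁ hi₂ (by exact hι)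
  -- `ι ≫ ρ` is the identity on the outer terms, hence invertible by the five lemma.
  set E := ι ≫ ρ
  have hE₁ : E.hom₁ = 𝟙 _ := hiA
  have hE₃ : E.hom₃ = 𝟙 _ := hiB
  have : IsIso E.hom₂ := isIso₂_of_isIso₁₃ E hT₀ hT₀
    (by rw [hE₁]; infer_instance) (by rw [hE₃]; infer_instance)
  have : IsIso E := by
    apply Triangle.isIso_of_isIsos
    · rw [hE₁]; infer_instance
    · infer_instance
    · rw [hE₃]; infer_instance
  have hE₁' : (inv E).hom₁ = 𝟙 _ := by
    have h := congrArg TriangleMorphism.hom₁ (IsIso.inv_hom_id E)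
    rwa [comp_hom₁, hE₁, Category.comp_id] at h
  have hE₃' : (inv E).hom₃ = 𝟙 _ := by
    have h := congrArg TriangleMorphism.hom₃ (IsIso.inv_hom_id E)
    rwa [comp_hom₃, hE₃, Category.comp_id] at h
  refine ⟨_, ι, ρ ≫ inv E, (Category.assoc _ _ _).symm.trans (IsIso.hom_inv_id E), ?_, ?_⟩
  · rw [comp_hom₁, comp_hom₁, hE₁', Category.comp_id]
    exact hrA
  · rw [comp_hom₃, comp_hom₃, hE₃', Category.comp_id]
    exact hrB

lemma isSplitIdempotent_hom₂ {T : Triangle C} (hT : T ∈ distTriang C) {φ : T ⟶ T}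
    (hφ : φ ≫ φ = φ) (h₁ : IsSplitIdempotent φ.hom₁) (h₃ : IsSplitIdempotent φ.hom₃) :
    IsSplitIdempotent φ.hom₂ := by
  obtain ⟨T₀, ι, ρ, hιρ, hρι₁, hρι₃⟩ := exists_retract_of_isSplitIdempotent_hom₁_hom₃ hT φ h₁ h₃
  have hq : IsSplitIdempotent (ρ ≫ ι).hom₂ :=
    ⟨T₀.obj₂, ι.hom₂, ρ.hom₂, by rw [← comp_hom₂, hιρ, id_hom₂], rfl⟩
  refine hq.of_sub_comp_sub_eq_zero (by rw [← comp_hom₂, hφ]) ?_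
  exact hom₂_comp_hom₂_eq_zero hT (φ - ρ ≫ ι) (φ - ρ ≫ ι)
    (sub_eq_zero.2 hρι₃.symm) (sub_eq_zero.2 hρι₁.symm)

end Pretriangulated

namespace Triangulated.TStructure

variable {C : Type*} [Category C] [Preadditive C] [HasZeroObject C] [HasShift C ℤ]
  [∀ (n : ℤ), (shiftFunctor C n).Additive] [Pretriangulated C] (t : TStructure C)

lemma isSplitIdempotent_of_isLE_of_isGE {X : C} (a : ℤ) [t.IsLE X a] [t.IsGE X a]
    {p : X ⟶ X} (hp : p ≫ p = p) : IsSplitIdempotent p := by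
  obtain ⟨F, ι, δ, hF⟩ := distinguished_cocone_triangle₁ (𝟙 X - p)
  have hι : ι ≫ p = ι := by
    have h : ι ≫ (𝟙 X - p) = 0 := comp_distTriang_mor_zero₁₂ _ hF
    rwa [Preadditive.comp_sub, Category.comp_id, sub_eq_zero, eq_comm] at h
  have hp' : p ≫ (𝟙 X - p) = 0 := by rw [Preadditive.comp_sub, Category.comp_id, hp, sub_self]
  obtain ⟨j, hj⟩ : ∃ j : X ⟶ F, p = j ≫ ι := Triangle.coyoneda_exact₂ _ hF p hp'
  let κ : (t.truncLE a).obj F ⟶ F := (t.truncLEι a).app F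
  let r : X ⟶ (t.truncLE a).obj F := t.liftTruncLE j a
  have hr : r ≫ κ ≫ ι = p := by rw [hj, t.liftTruncLE_ι_assoc]
  refine ⟨_, κ ≫ ι, r, t.to_truncLE_obj_ext ?_, hr⟩
  have : t.IsGE (X⟦(-1 : ℤ)⟧) (a + 1) := t.isGE_shift X a (-1) (a + 1)
  have hθ : (((κ ≫ ι) ≫ r) ≫ κ - κ) ≫ ι = 0 := by
    simp only [Preadditive.sub_comp, Category.assoc, hr, hι, sub_self]
  obtain ⟨g, hg⟩ := Triangle.coyoneda_exact₂ _ (inv_rot_of_distTriang _ hF) _ hθ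
  rw [← sub_eq_zero, Category.id_comp, hg,
    t.zero_of_isLE_of_isGE g a (a + 1) (by lia) inferInstance this]
  exact zero_comp

lemma isGE_truncLE_obj_of_isGE (X : C) (a b : ℤ) (hab : a ≤ b + 2) [t.IsGE X a] :
    t.IsGE ((t.truncLE b).obj X) a :=
  have := t.isGE_shift ((t.truncGT b).obj X) (b + 1) (-1) (b + 2)
  t.isGE₂ _ (inv_rot_of_distTriang _ (t.triangleLEGT_distinguished b X)) a
    (t.isGE_of_ge (((t.truncGT b).obj X)⟦(-1 : ℤ)⟧) a (b + 2)) ‹_›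

lemma isLE_truncGT_obj_of_isLE (X : C) (a b : ℤ) (hab : a ≤ b + 1) [t.IsLE X b] :
    t.IsLE ((t.truncGT a).obj X) b :=
  have := t.isLE_shift ((t.truncLE a).obj X) a 1 (a - 1)
  t.isLE₂ _ (rot_of_distTriang _ (t.triangleLEGT_distinguished a X)) b ‹_›
    (t.isLE_of_le (((t.truncLE a).obj X)⟦(1 : ℤ)⟧) (a - 1) b)

lemma isSplitIdempotent_of_isGE_of_isLE_add (n : ℕ) :
    ∀ (a : ℤ) {X : C} [t.IsGE X a] [t.IsLE X (a + n)] {p : X ⟶ X},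
      p ≫ p = p → IsSplitIdempotent p := by
  induction n with
  | zero =>
    intro a X _ _ p hp
    have : t.IsLE X a := t.isLE_of_le X (a + (0 : ℕ)) a (by simp)
    exact t.isSplitIdempotent_of_isLE_of_isGE a hp
  | succ n ih =>
    intro a X _ _ p hp
    have := t.isGE_truncLE_obj_of_isGE X a a (by lia)
    have := t.isLE_truncGT_obj_of_isLE X a (a + (n + 1 : ℕ)) (by lia)
    have : t.IsLE ((t.truncGT a).obj X) (a + 1 + n) :=
      t.isLE_of_le _ (a + (n + 1 : ℕ)) _ (by push_cast; lia)
    have h₁ : IsSplitIdempotent ((t.truncLE a).map p) :=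
      t.isSplitIdempotent_of_isLE_of_isGE a (by rw [← Functor.map_comp, hp])
    have h₃ : IsSplitIdempotent ((t.truncGT a).map p) :=
      ih (a + 1) (by rw [← Functor.map_comp, hp])
    exact isSplitIdempotent_hom₂ (t.triangleLEGT_distinguished a X)
      (φ := (t.triangleLEGT a).map p) (by rw [← Functor.map_comp, hp]) h₁ h₃

end Triangulated.TStructure

end CategoryTheory

theorem triangulated_with_bounded_tstructure_isIdempotentComplete_general
    {C : Type*} [Category C] [Preadditive C] [HasZeroObject C] [HasShift C ℤ]
    [∀ (n : ℤ), (shiftFunctor C n).Additive] [Pretriangulated C]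
    (t : Triangulated.TStructure C)
    (hbounded : ∀ X : C, ∃ n : ℤ, 0 ≤ n ∧ t.le n X ∧ t.ge (-n) X) :
    IsIdempotentComplete C := by
  refine ⟨fun X p hp => ?_⟩
  obtain ⟨n, hn, hle, hge⟩ := hbounded X
  have : t.IsGE X (-n) := ⟨hge⟩
  have : t.IsLE X (-n + (2 * n).toNat) := ⟨by rwa [show -n + ((2 * n).toNat : ℤ) = n by lia]⟩
  exact t.isSplitIdempotent_of_isGE_of_isLE_add (2 * n).toNat (-n) hp

/-- Any triangulated category endowed with a bounded t-structure is idempotent complete. -/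
theorem triangulated_with_bounded_tstructure_isIdempotentComplete
    {C : Type*} [Category C] [Preadditive C] [HasZeroObject C] [HasShift C ℤ]
    [∀ (n : ℤ), (shiftFunctor C n).Additive] [Pretriangulated C] [IsTriangulated C]
    (t : Triangulated.TStructure C)
    (hbounded : ∀ X : C, ∃ n : ℤ, 0 ≤ n ∧ t.le n X ∧ t.ge (-n) X) :
    IsIdempotentComplete C :=
  triangulated_with_bounded_tstructure_isIdempotentComplete_general t hbounded
end

section
/- Let A be a commutative ring, S \subseteq A a multiplicative subset, and T an A-linear triangulated category with a t-structure. Then the S-localization S^{-1}T carries a unique t-structure for which the canonical functor T \to S^{-1}T is t-exact; moreover, if the t-structure on T is bounded, so is the induced t-structure on S^{-1}T. -/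
/-!
A t-structure on `S⁻¹T` making `L` t-exact must contain the essential images of the aisles of
`t` in its own aisles, and by orthogonality two t-structures with `le n ⊆ le' n` and
`ge n ⊆ ge' n` for all `n` coincide; so there is at most one, namely the one whose aisles are
these essential images. They do form a t-structure: shifts and truncation triangles are carried
over by the triangulated functor `L`, which is essentially surjective, and orthogonality survives
because the localization of a zero Hom-module is zero. Boundedness transfers object by object.
-/

open CategoryTheory CategoryTheory.Limits CategoryTheory.Pretriangulated

namespace CategoryTheory

universe v₁ v₂

variable {C : Type*} [Category.{v₁} C] [Preadditive C] [HasZeroObject C] [HasShift C ℤ]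
  [∀ n : ℤ, (shiftFunctor C n).Additive] [Pretriangulated C]
  {D : Type*} [Category.{v₂} D] [Preadditive D] [HasZeroObject D] [HasShift D ℤ]
  [∀ n : ℤ, (shiftFunctor D n).Additive] [Pretriangulated D]

lemma Pretriangulated.distinguished_mk_of_iso₂ {X₁ X₂ X₃ Y : C} {f : X₁ ⟶ X₂} {g : X₂ ⟶ X₃}
    {h : X₃ ⟶ X₁⟦(1 : ℤ)⟧} (hT : Triangle.mk f g h ∈ distTriang C) (e : X₂ ≅ Y) :
    Triangle.mk (f ≫ e.hom) (e.inv ≫ g) h ∈ distTriang C :=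
  isomorphic_distinguished _ hT _ <| Triangle.isoMk _ _ (Iso.refl _) e.symm (Iso.refl _)
    (by dsimp only [Triangle.mk]; simp) (by dsimp only [Triangle.mk]; simp)
    (by dsimp only [Triangle.mk]; simp)

namespace Triangulated.TStructure

def IsBounded (t : TStructure C) : Prop :=
  ∀ X : C, ∃ n : ℤ, 0 ≤ n ∧ t.le n X ∧ t.ge (-n) X

lemma le_le_of_ge_le {t₁ t₂ : TStructure C} (hge : ∀ n, t₁.ge n ≤ t₂.ge n) (n : ℤ) :
    t₂.le n ≤ t₁.le n := by
  intro X hX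
  rw [le_iff_isLE, t₁.isLE_iff_orthogonal n (n + 1) rfl]
  intro Y f hY
  exact t₂.zero_of_isLE_of_isGE f n (n + 1) (by lia) ⟨hX⟩ ⟨hge _ _ hY.ge⟩

lemma ge_le_of_le_le {t₁ t₂ : TStructure C} (hle : ∀ n, t₁.le n ≤ t₂.le n) (n : ℤ) :
    t₂.ge n ≤ t₁.ge n := by
  intro X hX
  rw [ge_iff_isGE, t₁.isGE_iff_orthogonal (n - 1) n (by lia)]
  intro Y f hY
  exact t₂.zero_of_isLE_of_isGE f (n - 1) n (by lia) ⟨hle _ _ hY.le⟩ ⟨hX⟩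

lemma ext_of_le_of_ge {t₁ t₂ : TStructure C} (hle : ∀ n, t₁.le n ≤ t₂.le n)
    (hge : ∀ n, t₁.ge n ≤ t₂.ge n) : t₁ = t₂ := by
  obtain ⟨le₁, ge₁, _⟩ := t₁
  obtain ⟨le₂, ge₂, _⟩ := t₂
  obtain rfl : le₁ = le₂ := funext fun n ↦ le_antisymm (hle n) (le_le_of_ge_le hge n)
  obtain rfl : ge₁ = ge₂ := funext fun n ↦ le_antisymm (hge n) (ge_le_of_le_le hle n)
  rfl

end Triangulated.TStructure

def Functor.IsTExact (L : C ⥤ D) (t : Triangulated.TStructure C)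
    (t' : Triangulated.TStructure D) : Prop :=
  ∀ (n : ℤ) (X : C), (t.le n X → t'.le n (L.obj X)) ∧ (t.ge n X → t'.ge n (L.obj X))

namespace Triangulated.TStructure

lemma IsBounded.of_isTExact {t : TStructure C} {t' : TStructure D} {L : C ⥤ D} [L.EssSurj]
    (hb : t.IsBounded) (h : L.IsTExact t t') : t'.IsBounded := by
  intro Y
  obtain ⟨X, ⟨e⟩⟩ := Functor.EssSurj.mem_essImage (F := L) Y
  obtain ⟨n, hn, hle, hge⟩ := hb X
  exact ⟨n, hn, (t'.le n).prop_of_iso e ((h n X).1 hle),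
    (t'.ge (-n)).prop_of_iso e ((h (-n) X).2 hge)⟩

variable (t : TStructure C) (L : C ⥤ D) [L.CommShift ℤ] [L.IsTriangulated] [L.EssSurj]

def map (hL : ∀ ⦃X Y : C⦄, t.le 0 X → t.ge 1 Y → ∀ g : L.obj X ⟶ L.obj Y, g = 0) :
    TStructure D where
  le n := (t.le n).map L
  ge n := (t.ge n).map L
  le_shift := by
    rintro n a n' h Y ⟨X, hX, ⟨e⟩⟩
    exact ⟨X⟦a⟧, t.le_shift n a n' h X hX,
      ⟨(L.commShiftIso a).app X ≪≫ (shiftFunctor D a).mapIso e⟩⟩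
  ge_shift := by
    rintro n a n' h Y ⟨X, hX, ⟨e⟩⟩
    exact ⟨X⟦a⟧, t.ge_shift n a n' h X hX,
      ⟨(L.commShiftIso a).app X ≪≫ (shiftFunctor D a).mapIso e⟩⟩
  zero' := by
    rintro Y₁ Y₂ f ⟨X₁, hX₁, ⟨e₁⟩⟩ ⟨X₂, hX₂, ⟨e₂⟩⟩
    rw [← cancel_epi e₁.hom, ← cancel_mono e₂.inv]
    simpa using hL hX₁ hX₂ (e₁.hom ≫ f ≫ e₂.inv)
  le_zero_le := ObjectProperty.map_monotone t.le_zero_le L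
  ge_one_le := ObjectProperty.map_monotone t.ge_one_le L
  exists_triangle_zero_one Y := by
    obtain ⟨X, ⟨e⟩⟩ := Functor.EssSurj.mem_essImage (F := L) Y
    obtain ⟨X₀, X₁, h₀, h₁, f, g, h, mem⟩ := t.exists_triangle_zero_one X
    exact ⟨L.obj X₀, L.obj X₁, ObjectProperty.prop_map_obj _ _ h₀,
      ObjectProperty.prop_map_obj _ _ h₁, _, _, _,
      Pretriangulated.distinguished_mk_of_iso₂ (L.map_distinguished _ mem) e⟩

variable {t L}
variable (hL : ∀ ⦃X Y : C⦄, t.le 0 X → t.ge 1 Y → ∀ g : L.obj X ⟶ L.obj Y, g = 0)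

lemma isTExact_map : L.IsTExact t (t.map L hL) :=
  fun _ _ ↦ ⟨ObjectProperty.prop_map_obj _ _, ObjectProperty.prop_map_obj _ _⟩

lemma eq_map_of_isTExact {t' : TStructure D} (h : L.IsTExact t t') : t' = t.map L hL := by
  refine (ext_of_le_of_ge ?_ ?_).symm
  · rintro n Y ⟨X, hX, ⟨e⟩⟩
    exact (t'.le n).prop_of_iso e ((h n X).1 hX)
  · rintro n Y ⟨X, hX, ⟨e⟩⟩
    exact (t'.ge n).prop_of_iso e ((h n X).2 hX)

lemma existsUnique_isTExact
    (hL : ∀ ⦃X Y : C⦄, t.le 0 X → t.ge 1 Y → ∀ g : L.obj X ⟶ L.obj Y, g = 0) :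
    ∃! t' : TStructure D, L.IsTExact t t' :=
  ⟨t.map L hL, isTExact_map hL, fun _ ↦ eq_map_of_isTExact hL⟩

end Triangulated.TStructure

end CategoryTheory

theorem localization_tStructure_exists_unique_general
    {A : Type*} [CommRing A] (S : Submonoid A)
    {T : Type*} [Category T] [Preadditive T] [HasZeroObject T] [HasShift T ℤ]
    [∀ (n : ℤ), (shiftFunctor T n).Additive] [Pretriangulated T] [Linear A T]
    {D : Type*} [Category D] [Preadditive D] [HasZeroObject D] [HasShift D ℤ]
    [∀ (n : ℤ), (shiftFunctor D n).Additive] [Pretriangulated D] [Linear A D]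
    (t : Triangulated.TStructure T)
    (L : T ⥤ D) [L.CommShift ℤ] [L.IsTriangulated] [L.Additive] [L.Linear A]
    -- `D` has the same objects as `T`:
    (hobj : Function.Bijective L.obj)
    -- the Hom-modules of `D` are the `S`-localizations of those of `T`:
    (hhom : ∀ X Y : T,
      IsLocalizedModule S (L.mapLinearMap A : (X ⟶ Y) →ₗ[A] (L.obj X ⟶ L.obj Y))) :
    (∃! t' : Triangulated.TStructure D,
      ∀ (n : ℤ) (X : T),
        (t.le n X → t'.le n (L.obj X)) ∧ (t.ge n X → t'.ge n (L.obj X))) ∧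
    ((∀ X : T, ∃ n : ℤ, 0 ≤ n ∧ t.le n X ∧ t.ge (-n) X) →
      ∀ t' : Triangulated.TStructure D,
        (∀ (n : ℤ) (X : T),
          (t.le n X → t'.le n (L.obj X)) ∧ (t.ge n X → t'.ge n (L.obj X))) →
        ∀ Y : D, ∃ n : ℤ, 0 ≤ n ∧ t'.le n Y ∧ t'.ge (-n) Y) := by
  have : L.EssSurj := L.essSurj_of_surj hobj.2
  have hL : ∀ ⦃X Y : T⦄, t.le 0 X → t.ge 1 Y → ∀ g : L.obj X ⟶ L.obj Y, g = 0 := by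
    intro X Y hX hY g
    have : Subsingleton (X ⟶ Y) := ⟨fun f₁ f₂ ↦ (t.zero' f₁ hX hY).trans (t.zero' f₂ hX hY).symm⟩
    have := IsLocalizedModule.subsingleton_of_subsingleton S (L.mapLinearMap A : (X ⟶ Y) →ₗ[A] _)
    exact Subsingleton.elim g 0
  exact ⟨Triangulated.TStructure.existsUnique_isTExact hL,
    fun hb _ ht' ↦ Triangulated.TStructure.IsBounded.of_isTExact hb ht'⟩

/-- Let `A` be a commutative ring, `S ⊆ A` a multiplicative subset, and `T` an `A`-linear
triangulated category with a t-structure `t`.  Let `L : T ⥤ D` realize the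
`S`-localization `S⁻¹T` of `T`: `D` is a pretriangulated category, `L` is an `A`-linear
triangulated functor which is bijective on objects, each map on Hom-modules
`Hom_T(X,Y) → Hom_D(LX,LY)` is the `S`-localization `Hom_T(X,Y) → Hom_T(X,Y) ⊗_A S⁻¹A`,
and every distinguished triangle of `D` is isomorphic to the image of one of `T`.
Then `D` carries a unique t-structure for which `L` is t-exact; moreover, if `t` is
bounded, so is this induced t-structure. -/
theorem localization_tStructure_exists_unique
    {A : Type*} [CommRing A] (S : Submonoid A)
    {T : Type*} [Category T] [Preadditive T] [HasZeroObject T] [HasShift T ℤ]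
    [∀ (n : ℤ), (shiftFunctor T n).Additive] [Pretriangulated T] [Linear A T]
    {D : Type*} [Category D] [Preadditive D] [HasZeroObject D] [HasShift D ℤ]
    [∀ (n : ℤ), (shiftFunctor D n).Additive] [Pretriangulated D] [Linear A D]
    (t : Triangulated.TStructure T)
    (L : T ⥤ D) [L.CommShift ℤ] [L.IsTriangulated] [L.Additive] [L.Linear A]
    -- `D` has the same objects as `T`:
    (hobj : Function.Bijective L.obj)
    -- the Hom-modules of `D` are the `S`-localizations of those of `T`:
    (hhom : ∀ X Y : T,
      IsLocalizedModule S (L.mapLinearMap A : (X ⟶ Y) →ₗ[A] (L.obj X ⟶ L.obj Y)))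
    -- the distinguished triangles of `D` are exactly those isomorphic to images of
    -- distinguished triangles of `T`:
    (htriangle : ∀ T' ∈ distTriang D,
      ∃ Tt ∈ distTriang T, Nonempty (T' ≅ L.mapTriangle.obj Tt)) :
    (∃! t' : Triangulated.TStructure D,
      ∀ (n : ℤ) (X : T),
        (t.le n X → t'.le n (L.obj X)) ∧ (t.ge n X → t'.ge n (L.obj X))) ∧
    ((∀ X : T, ∃ n : ℤ, 0 ≤ n ∧ t.le n X ∧ t.ge (-n) X) →
      ∀ t' : Triangulated.TStructure D,
        (∀ (n : ℤ) (X : T),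
          (t.le n X → t'.le n (L.obj X)) ∧ (t.ge n X → t'.ge n (L.obj X))) →
        ∀ Y : D, ∃ n : ℤ, 0 ≤ n ∧ t'.le n Y ∧ t'.ge (-n) Y) :=
  localization_tStructure_exists_unique_general S t L hobj hhom
end
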